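/- arXiv:2603.10190 — 3 statements merged into one kernel-verified Lean document; each statement's English description precedes it below -/
import Mathlib

section
/- Let μ̃ ∈ (0,1) and 0 < t < 1 - μ̃. Then there exists h > 0 such that e^{-μ̃h - th}(1 - μ̃ + μ̃ e^{h}) ≤ e^{-2t²}. In particular, taking h₀ = ln((1-μ̃)(t+μ̃)/((1-μ̃-t)μ̃)) works. -/
/-!
With `p = μ̃` and `q = μ̃ + t` the function is the Chernoff bound `e^{-qh}(1 - p + p e^h)` for
the mean of Bernoulli(`p`) variables. At its minimiser `h₀ = log (q(1-p)/((1-q)p))` it equals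
`e^{-D(q‖p)}`, where `D` is the Kullback–Leibler divergence between Bernoulli laws, and Pinsker's
inequality `D(q‖p) ≥ 2(q-p)²` gives `e^{-2t²}`. Pinsker holds because `x ↦ D(x‖p) - 2(x-p)²` is
convex on `(0,1)`, its second derivative being `1/x + 1/(1-x) - 4 ≥ 0`, with a critical point
at `x = p`.
-/

open Real Set

noncomputable def binaryKL (q p : ℝ) : ℝ :=
  q * log (q / p) + (1 - q) * log ((1 - q) / (1 - p))

@[simp]
lemma binaryKL_self (p : ℝ) : binaryKL p p = 0 := by
  simp [binaryKL]

section Pinsker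

variable {p x : ℝ}

lemma hasDerivAt_log_div_const (hp : p ≠ 0) (hx : x ≠ 0) :
    HasDerivAt (fun y => log (y / p)) x⁻¹ x :=
  (((hasDerivAt_id' x).div_const p).log (div_ne_zero hx hp)).congr_deriv (by field_simp)

lemma hasDerivAt_log_one_sub_div_const (hp : p ≠ 1) (hx : x ≠ 1) :
    HasDerivAt (fun y => log ((1 - y) / (1 - p))) (-(1 - x)⁻¹) x := by
  have h := (hasDerivAt_log_div_const (sub_ne_zero.2 hp.symm) (sub_ne_zero.2 hx.symm)).comp x
    ((hasDerivAt_id' x).const_sub 1)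
  exact h.congr_deriv (by ring)

lemma hasDerivAt_binaryKL (hp0 : p ≠ 0) (hp1 : p ≠ 1) (hx0 : x ≠ 0) (hx1 : x ≠ 1) :
    HasDerivAt (binaryKL · p) (log (x / p) - log ((1 - x) / (1 - p))) x := by
  have h := ((hasDerivAt_id' x).mul (hasDerivAt_log_div_const hp0 hx0)).add
    (((hasDerivAt_id' x).const_sub 1).mul (hasDerivAt_log_one_sub_div_const hp1 hx1))
  exact h.congr_deriv (by field_simp [sub_ne_zero.2 hx1.symm]; ring)

lemma convexOn_binaryKL_sub_two_mul_sq (hp0 : p ≠ 0) (hp1 : p ≠ 1) :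
    ConvexOn ℝ (Ioo 0 1) (fun x => binaryKL x p - 2 * (x - p) ^ 2) := by
  have hF : ∀ x ∈ Ioo (0 : ℝ) 1, HasDerivAt (fun x => binaryKL x p - 2 * (x - p) ^ 2)
      (log (x / p) - log ((1 - x) / (1 - p)) - 4 * (x - p)) x := by
    rintro x ⟨hx0, hx1⟩
    exact ((hasDerivAt_binaryKL hp0 hp1 hx0.ne' hx1.ne).sub
      ((((hasDerivAt_id' x).sub_const p).pow 2).const_mul 2)).congr_deriv (by ring)
  have hF' : ∀ x ∈ Ioo (0 : ℝ) 1,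
      HasDerivAt (fun x => log (x / p) - log ((1 - x) / (1 - p)) - 4 * (x - p))
        (x⁻¹ + (1 - x)⁻¹ - 4) x := by
    rintro x ⟨hx0, hx1⟩
    exact (((hasDerivAt_log_div_const hp0 hx0.ne').sub
      (hasDerivAt_log_one_sub_div_const hp1 hx1.ne)).sub
        (((hasDerivAt_id' x).sub_const p).const_mul 4)).congr_deriv (by ring)
  refine convexOn_of_hasDerivWithinAt2_nonneg
    (f' := fun x => log (x / p) - log ((1 - x) / (1 - p)) - 4 * (x - p))
    (f'' := fun x => x⁻¹ + (1 - x)⁻¹ - 4) (convex_Ioo 0 1)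
    (fun x hx => (hF x hx).continuousAt.continuousWithinAt) ?_ ?_ ?_ <;> rw [interior_Ioo]
  · exact fun x hx => (hF x hx).hasDerivWithinAt
  · exact fun x hx => (hF' x hx).hasDerivWithinAt
  · rintro x ⟨hx0, hx1⟩
    have h1x : 0 < 1 - x := by linarith
    have hsq : x⁻¹ + (1 - x)⁻¹ - 4 = (2 * x - 1) ^ 2 / (x * (1 - x)) := by
      field_simp
      ring
    rw [hsq]
    exact div_nonneg (sq_nonneg _) (mul_pos hx0 h1x).le

theorem two_mul_sq_sub_le_binaryKL {q : ℝ} (hp0 : 0 < p) (hp1 : p < 1) (hq0 : 0 < q)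
    (hq1 : q < 1) : 2 * (q - p) ^ 2 ≤ binaryKL q p := by
  have hcrit : HasDerivAt (fun x => binaryKL x p - 2 * (x - p) ^ 2) 0 p := by
    refine ((hasDerivAt_binaryKL hp0.ne' hp1.ne hp0.ne' hp1.ne).sub
      ((((hasDerivAt_id' p).sub_const p).pow 2).const_mul 2)).congr_deriv ?_
    simp [div_self hp0.ne', div_self (sub_pos.2 hp1).ne']
  have hmin := (convexOn_binaryKL_sub_two_mul_sq hp0.ne' hp1.ne).isMinOn_of_rightDeriv_eq_zero
    (by rw [interior_Ioo]; exact ⟨hp0, hp1⟩)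
    (hcrit.hasDerivWithinAt.derivWithin (uniqueDiffWithinAt_Ioi p))
  have h : binaryKL p p - 2 * (p - p) ^ 2 ≤ binaryKL q p - 2 * (q - p) ^ 2 := hmin ⟨hq0, hq1⟩
  rw [binaryKL_self] at h
  linarith

end Pinsker

section Chernoff

variable {p q : ℝ}

lemma one_lt_odds_ratio (hp0 : 0 < p) (hpq : p < q) (hq1 : q < 1) :
    1 < q * (1 - p) / ((1 - q) * p) := by
  rw [one_lt_div (mul_pos (by linarith) hp0)]
  nlinarith

theorem exp_neg_mul_mul_bernoulli_mgf_log_odds_ratio (hp0 : 0 < p) (hp1 : p < 1) (hq0 : 0 < q)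
    (hq1 : q < 1) :
    exp (-q * log (q * (1 - p) / ((1 - q) * p))) *
        (1 - p + p * exp (log (q * (1 - p) / ((1 - q) * p)))) = exp (-binaryKL q p) := by
  have h1p : 0 < 1 - p := by linarith
  have h1q : 0 < 1 - q := by linarith
  have hmgf : 1 - p + p * (q * (1 - p) / ((1 - q) * p)) = exp (log ((1 - p) / (1 - q))) := by
    rw [exp_log (div_pos h1p h1q)]
    field_simp
    ring
  rw [exp_log (by positivity), hmgf, ← exp_add, binaryKL]
  congr 1
  rw [log_div (by positivity) (by positivity), log_div (by positivity) (by positivity),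
    log_div (by positivity) (by positivity), log_div (by positivity) (by positivity),
    log_mul (by positivity) (by positivity), log_mul (by positivity) (by positivity)]
  ring

end Chernoff

/-- There exists `h > 0` with `e^{-μ̃h - th}(1 - μ̃ + μ̃ e^h) ≤ e^{-2t²}`; in particular
`h₀ = ln((1-μ̃)(t+μ̃)/((1-μ̃-t)μ̃))` works. -/
theorem exists_pos_exp_bound (μ t : ℝ) (hμ0 : 0 < μ) (hμ1 : μ < 1)
    (ht0 : 0 < t) (ht1 : t < 1 - μ) :
    (∃ h > 0, exp (-μ * h - t * h) * (1 - μ + μ * exp h) ≤ exp (-2 * t ^ 2)) ∧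
      (0 < log ((1 - μ) * (t + μ) / ((1 - μ - t) * μ)) ∧
        exp (-μ * log ((1 - μ) * (t + μ) / ((1 - μ - t) * μ))
              - t * log ((1 - μ) * (t + μ) / ((1 - μ - t) * μ))) *
            (1 - μ + μ * exp (log ((1 - μ) * (t + μ) / ((1 - μ - t) * μ)))) ≤
          exp (-2 * t ^ 2)) := by
  have hq1 : μ + t < 1 := by linarith
  have hratio : (1 - μ) * (t + μ) / ((1 - μ - t) * μ) =
      (μ + t) * (1 - μ) / ((1 - (μ + t)) * μ) := by ring
  set h₀ := log ((1 - μ) * (t + μ) / ((1 - μ - t) * μ)) with hh₀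
  have hpos : 0 < h₀ := by
    rw [hh₀, hratio]
    exact log_pos (one_lt_odds_ratio hμ0 (by linarith) hq1)
  have hbound : exp (-μ * h₀ - t * h₀) * (1 - μ + μ * exp h₀) ≤ exp (-2 * t ^ 2) := by
    calc _ = exp (-binaryKL (μ + t) μ) := by
          rw [hh₀, hratio, ← exp_neg_mul_mul_bernoulli_mgf_log_odds_ratio hμ0 hμ1 (by linarith) hq1]
          ring_nf
      _ ≤ exp (-2 * t ^ 2) := by
          have hpinsker := two_mul_sq_sub_le_binaryKL hμ0 hμ1 (by linarith) hq1
          rw [exp_le_exp]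
          linarith
  exact ⟨⟨h₀, hpos, hbound⟩, hpos, hbound⟩
end

section
/- Define g(μ̃) = (1/(1-2μ̃))·ln((1-μ̃)/μ̃) for 0 < μ̃ < 1/2 and g(μ̃) = 1/(2μ̃(1-μ̃)) for 1/2 ≤ μ̃ < 1. Then g(μ̃) ≥ 2 for all μ̃ ∈ (0,1), with equality at μ̃ = 1/2. -/
/-!
With `t = 1 - 2μ`, the logarithmic branch is `log ((1 + t) / (1 - t)) / t = 2 artanh t / t`,
which is at least `2` because `artanh t ≥ t` for `0 ≤ t < 1`. The other branch is at least `2`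
because `μ (1 - μ) ≤ 1 / 4`.
-/

open Real

lemma two_mul_le_log_one_add_div_one_sub {x : ℝ} (h₀ : 0 ≤ x) (h₁ : x < 1) :
    2 * x ≤ log ((1 + x) / (1 - x)) := by
  have h := sum_range_le_log_div h₀ h₁ 1
  norm_num at h
  linarith

lemma two_le_one_div_one_sub_two_mul_mul_log {μ : ℝ} (h₀ : 0 < μ) (h : μ < 1 / 2) :
    2 ≤ 1 / (1 - 2 * μ) * log ((1 - μ) / μ) := by
  have ht : 0 < 1 - 2 * μ := by linarith
  have hlog := two_mul_le_log_one_add_div_one_sub ht.le (by linarith)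
  have hratio : (1 + (1 - 2 * μ)) / (1 - (1 - 2 * μ)) = (1 - μ) / μ := by
    field_simp
    ring
  rw [hratio] at hlog
  rw [one_div_mul_eq_div, le_div_iff₀ ht]
  linarith

lemma two_le_one_div_two_mul_mul_one_sub {μ : ℝ} (h₀ : 0 < μ) (h₁ : μ < 1) :
    2 ≤ 1 / (2 * μ * (1 - μ)) := by
  have hpos : 0 < 2 * μ * (1 - μ) := mul_pos (by linarith) (by linarith)
  rw [le_div_iff₀ hpos]
  nlinarith [sq_nonneg (2 * μ - 1)]

/-- The piecewise function `g` satisfies `g(μ̃) ≥ 2` on `(0,1)`, with equality at `μ̃ = 1/2`. -/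
theorem g_ge_two :
    (∀ μ : ℝ, 0 < μ → μ < 1 →
      2 ≤ (if μ < 1 / 2 then (1 / (1 - 2 * μ)) * log ((1 - μ) / μ)
            else 1 / (2 * μ * (1 - μ)))) ∧
      (if (1 : ℝ) / 2 < 1 / 2 then (1 / (1 - 2 * (1 / 2 : ℝ))) * log ((1 - 1 / 2) / (1 / 2))
        else 1 / (2 * (1 / 2 : ℝ) * (1 - 1 / 2))) = 2 := by
  refine ⟨fun μ h₀ h₁ => ?_, by norm_num⟩
  split_ifs with h
  · exact two_le_one_div_one_sub_two_mul_mul_log h₀ h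
  · exact two_le_one_div_two_mul_mul_one_sub h₀ h₁
end

section
/- (Hoeffding-type lower tail bound for exchangeable random variables) Under the same setup, with μ̃₋ = inf_{q ∈ supp(ρ)} E_q[X₁], for 0 < t < μ̃₋ one has P(μ̃₋ - X̄ ≥ t) ≤ e^{-2Mt²}. -/
open MeasureTheory ProbabilityTheory Real

noncomputable instance : MeasurableSpace (ProbabilityMeasure ℝ) := borel _

/-- The mixture `∫ q^{⊗M} ρ(dq)` of i.i.d. product laws over the mixing measure `ρ`. -/
noncomputable def iidMix (M : ℕ) (ρ : Measure (ProbabilityMeasure ℝ)) : Measure (Fin M → ℝ) :=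
  ρ.bind fun q => Measure.pi fun _ => (q : Measure ℝ)

/-- The (topological) support of a measure on `P[0,1]`-type spaces: the set of points all of
whose open neighbourhoods have positive measure. -/
def mSupport (ρ : Measure (ProbabilityMeasure ℝ)) : Set (ProbabilityMeasure ℝ) :=
  {q | ∀ U : Set (ProbabilityMeasure ℝ), IsOpen U → q ∈ U → ρ U ≠ 0}

/-- The mean `E_q[X] = ∫ x q(dx)` of a probability measure `q`. -/
noncomputable def pMean (q : ProbabilityMeasure ℝ) : ℝ := ∫ x, x ∂(q : Measure ℝ)

/-!
Conditionally on the de Finetti parameter `q`, the coordinates are i.i.d. with law `q`, which lives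
on `[0,1]`, so Hoeffding's inequality bounds the conditional probability of `μ̃₋ - X̄ ≥ t` by
`exp (-2 M t²)` whenever `μ̃₋ ≤ E_q[X₁]`, in particular whenever `q` lies in the support of `ρ`.
It remains to see that `ρ` is concentrated on its support. The mixing measure is concentrated on
the laws living on `[0,1]`; by Prokhorov these form a compact, hence separable, subset of the
metrizable space `P(ℝ)`, and Lindelöf's covering argument shows that a measure concentrated on a
separable set is concentrated on its support.
-/

open Set Filter TopologicalSpace

theorem measureReal_pi_le_sum_integral_sub_le {ι : Type*} [Fintype ι] {q : Measure ℝ}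
    [IsProbabilityMeasure q] {a b : ℝ} (hq : ∀ᵐ y ∂q, y ∈ Icc a b) {ε : ℝ} (hε : 0 ≤ ε) :
    (Measure.pi fun _ : ι => q).real {x | ε ≤ ∑ i, ((∫ y, y ∂q) - x i)} ≤
      exp (-2 * ε ^ 2 / (Fintype.card ι * (b - a) ^ 2)) := by
  set P := Measure.pi fun _ : ι => q
  have hindep : iIndepFun (fun i (x : ι → ℝ) => (∫ y, y ∂q) - x i) P :=
    iIndepFun_pi (X := fun _ y => (∫ y, y ∂q) - y) fun _ => by fun_prop
  have hsubG (i : ι) : HasSubgaussianMGF (fun x : ι → ℝ => (∫ y, y ∂q) - x i)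
      ((‖b - a‖₊ / 2) ^ 2) P := by
    have hbd : ∀ᵐ x ∂P, x i ∈ Icc a b :=
      (measurePreserving_eval (fun _ : ι => q) i).quasiMeasurePreserving.ae hq
    have hmean : P[fun x => x i] = ∫ y, y ∂q :=
      integral_comp_eval (μ := fun _ : ι => q) (f := id) aestronglyMeasurable_id
    convert (hasSubgaussianMGF_of_mem_Icc (measurable_pi_apply i).aemeasurable hbd).neg using 1
    ext x
    simp [hmean]
  refine (HasSubgaussianMGF.measure_sum_ge_le_of_iIndepFun hindep (fun i _ => hsubG i) hε).trans_eq
    ?_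
  congr 1
  push_cast
  simp only [Real.norm_eq_abs, div_pow, sq_abs, Finset.sum_const, Finset.card_univ, nsmul_eq_mul]
  rw [show 2 * (Fintype.card ι * ((b - a) ^ 2 / 2 ^ 2)) = Fintype.card ι * (b - a) ^ 2 / 2 by ring,
    div_div_eq_mul_div]
  ring

theorem measure_pi_le_sub_average_le {M : ℕ} (hM : 0 < M) {q : Measure ℝ}
    [IsProbabilityMeasure q] (hq : ∀ᵐ y ∂q, y ∈ Icc (0 : ℝ) 1) {μm t : ℝ}
    (hμm : μm ≤ ∫ y, y ∂q) (ht : 0 ≤ t) :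
    Measure.pi (fun _ : Fin M => q) {x | t ≤ μm - (1 / M) * ∑ m, x m} ≤
      ENNReal.ofReal (exp (-2 * M * t ^ 2)) := by
  have hM' : (0 : ℝ) < M := Nat.cast_pos.2 hM
  have hsub : {x : Fin M → ℝ | t ≤ μm - (1 / M) * ∑ m, x m} ⊆
      {x | M * t ≤ ∑ m, ((∫ y, y ∂q) - x m)} := by
    intro x hx
    simp only [mem_ofPred_eq, Finset.sum_sub_distrib, Finset.sum_const, Finset.card_univ,
      Fintype.card_fin, nsmul_eq_mul] at hx ⊢
    rw [one_div, inv_mul_eq_div, le_sub_comm, div_le_iff₀ hM'] at hx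
    nlinarith
  refine (measure_mono hsub).trans
    ((ENNReal.le_ofReal_iff_toReal_le (measure_ne_top _ _) (exp_pos _).le).2 ?_)
  refine (measureReal_pi_le_sum_integral_sub_le hq (by positivity)).trans_eq ?_
  rw [Fintype.card_fin, sub_zero, one_pow, mul_one]
  field_simp

namespace MeasureTheory.Measure

section Bind

variable {α β : Type*} [MeasurableSpace α] [MeasurableSpace β] {ρ : Measure α} {f : α → Measure β}

-- `ρ.bind f` is the junk value `0` when `f` is not a.e.-measurable.
theorem aemeasurable_of_bind_ne_zero (h : ρ.bind f ≠ 0) : AEMeasurable f ρ := by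
  by_contra hf
  exact h (by rw [Measure.bind, map_of_not_aemeasurable hf, join_zero])

theorem ae_apply_eq_zero_of_bind_apply_eq_zero (h : ρ.bind f ≠ 0) {s : Set β}
    (hs : MeasurableSet s) (hs0 : ρ.bind f s = 0) : ∀ᵐ a ∂ρ, f a s = 0 := by
  have hf := aemeasurable_of_bind_ne_zero h
  have hfs : AEMeasurable (fun a => f a s) ρ := (measurable_coe hs).comp_aemeasurable hf
  rwa [bind_apply hs hf, lintegral_eq_zero_iff' hfs] at hs0

theorem bind_apply_le_of_ae_apply_le [IsProbabilityMeasure ρ] (h : ρ.bind f ≠ 0) {s : Set β}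
    (hs : MeasurableSet s) {c : ENNReal} (hc : ∀ᵐ a ∂ρ, f a s ≤ c) : ρ.bind f s ≤ c := by
  rw [bind_apply hs (aemeasurable_of_bind_ne_zero h)]
  calc ∫⁻ a, f a s ∂ρ ≤ ∫⁻ _, c ∂ρ := lintegral_mono_ae hc
    _ = c := by simp

end Bind

theorem support_mem_ae_of_ae_mem_isSeparable {X : Type*} [TopologicalSpace X]
    [PseudoMetrizableSpace X] [MeasurableSpace X] {μ : Measure X} {K : Set X}
    (hK : TopologicalSpace.IsSeparable K) (hμK : ∀ᵐ x ∂μ, x ∈ K) : μ.support ∈ ae μ := by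
  have : SecondCountableTopology ↥(K ∩ μ.supportᶜ) :=
    (hK.mono inter_subset_left).secondCountableTopology
  have hnull : (K ∩ μ.supportᶜ)ᶜ ∈ ae μ := by
    refine IsLindelof.of_coe.compl_mem_sets_of_nhdsWithin fun x hx => ?_
    obtain ⟨U, hU, hU0⟩ := notMem_support_iff_exists.1 hx.2
    exact ⟨U, mem_nhdsWithin_of_mem_nhds hU, compl_mem_ae_iff.2 hU0⟩
  filter_upwards [hμK, hnull] with x hxK hx
  by_contra hxS
  exact hx ⟨hxK, hxS⟩

end MeasureTheory.Measure

theorem MeasureTheory.ProbabilityMeasure.isCompact_setOf_ae_mem {E : Type*} [MeasurableSpace E]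
    [TopologicalSpace E] [T2Space E] [BorelSpace E] {K : Set E} (hK : IsCompact K) :
    IsCompact {μ : ProbabilityMeasure E | ∀ᵐ x ∂(μ : Measure E), x ∈ K} := by
  convert isCompact_setOfPred_probabilityMeasure_mass_eq_compl_isCompact_le
    (u := fun _ => 0) (K := fun _ => K) tendsto_const_nhds (fun _ => hK) (Or.inr monotone_const)
    using 3 with μ
  rw [forall_const, nonpos_iff_eq_zero, ProbabilityMeasure.null_iff_toMeasure_null]
  exact mem_ae_iff

theorem mSupport_eq_support (ρ : Measure (ProbabilityMeasure ℝ)) : mSupport ρ = ρ.support := by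
  ext q
  simp only [mSupport, mem_ofPred_eq, Measure.mem_support_iff_forall, pos_iff_ne_zero]
  refine ⟨fun h U hU => ?_, fun h U hU hqU => h U (hU.mem_nhds hqU)⟩
  obtain ⟨V, hVU, hV, hqV⟩ := mem_nhds_iff.1 hU
  exact fun hU0 => h V hV hqV (measure_mono_null hVU hU0)

theorem ae_ae_mem_of_ae_apply_mem_iidMix {M : ℕ} {ρ : Measure (ProbabilityMeasure ℝ)}
    (hmix : iidMix M ρ ≠ 0) (i : Fin M) {A : Set ℝ} (hA : MeasurableSet A)
    (h : ∀ᵐ x ∂iidMix M ρ, x i ∈ A) :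
    ∀ᵐ q : ProbabilityMeasure ℝ ∂ρ, ∀ᵐ y ∂(q : Measure ℝ), y ∈ A := by
  have hs : MeasurableSet {x : Fin M → ℝ | x i ∈ Aᶜ} := measurable_pi_apply i hA.compl
  filter_upwards [Measure.ae_apply_eq_zero_of_bind_apply_eq_zero
    (f := fun q : ProbabilityMeasure ℝ => Measure.pi fun _ : Fin M => (q : Measure ℝ)) hmix hs h]
    with q hq
  have hpre := (measurePreserving_eval (fun _ : Fin M => (q : Measure ℝ)) i).measure_preimage
    hA.compl.nullMeasurableSet
  exact mem_ae_iff.2 (hpre.symm.trans hq)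

/-- Hoeffding-type lower tail bound for exchangeable random variables:
`P(μ̃₋ - X̄ ≥ t) ≤ e^{-2Mt²}` where `μ̃₋ = inf_{q ∈ supp ρ} E_q[X₁]`. -/
theorem exchangeable_hoeffding_lower {Ω : Type*} [MeasureSpace Ω]
    [IsProbabilityMeasure (ℙ : Measure Ω)] (M : ℕ) (hM : 0 < M) (X : Fin M → Ω → ℝ)
    (hmeas : ∀ m, Measurable (X m)) (hbdd : ∀ m ω, X m ω ∈ Set.Icc (0 : ℝ) 1)
    (ρ : Measure (ProbabilityMeasure ℝ)) [IsProbabilityMeasure ρ]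
    (hlaw : Measure.map (fun ω (m : Fin M) => X m ω) (ℙ : Measure Ω) = iidMix M ρ)
    (μm : ℝ) (hμm : μm = sInf (pMean '' mSupport ρ))
    (t : ℝ) (ht0 : 0 < t) (ht1 : t < μm) :
    (ℙ : Measure Ω) {ω | t ≤ μm - (1 / M) * (∑ m : Fin M, X m ω)} ≤
      ENNReal.ofReal (exp (-2 * M * t ^ 2)) := by
  have hX : Measurable fun ω (m : Fin M) => X m ω := measurable_pi_lambda _ hmeas
  have hmix : iidMix M ρ ≠ 0 := by
    rw [← hlaw]
    exact (Measure.isProbabilityMeasure_map hX.aemeasurable).ne_zero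
  have hunit : ∀ᵐ q : ProbabilityMeasure ℝ ∂ρ, ∀ᵐ y ∂(q : Measure ℝ), y ∈ Icc (0 : ℝ) 1 := by
    refine ae_ae_mem_of_ae_apply_mem_iidMix hmix ⟨0, hM⟩ measurableSet_Icc ?_
    rw [← hlaw, ae_map_iff hX.aemeasurable (measurable_pi_apply _ measurableSet_Icc)]
    exact ae_of_all _ fun ω => hbdd _ ω
  have hsupp : ∀ᵐ q ∂ρ, q ∈ mSupport ρ := mSupport_eq_support ρ ▸
    Measure.support_mem_ae_of_ae_mem_isSeparable
      (ProbabilityMeasure.isCompact_setOf_ae_mem isCompact_Icc).isSeparable hunit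
  -- otherwise `sInf` would be the junk value `0`, contradicting `0 < t < μm`
  have hbelow : BddBelow (pMean '' mSupport ρ) := by
    by_contra h
    rw [Real.sInf_of_not_bddBelow h] at hμm
    linarith
  have hS : MeasurableSet {x : Fin M → ℝ | t ≤ μm - (1 / M) * ∑ m, x m} :=
    measurableSet_le measurable_const (by fun_prop)
  calc (ℙ : Measure Ω) {ω | t ≤ μm - (1 / M) * (∑ m : Fin M, X m ω)}
      = iidMix M ρ {x | t ≤ μm - (1 / M) * ∑ m, x m} := by
        rw [← hlaw, Measure.map_apply hX hS]; rfl
    _ ≤ _ := Measure.bind_apply_le_of_ae_apply_le hmix hS ?_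
  filter_upwards [hunit, hsupp] with q hq hqS
  exact measure_pi_le_sub_average_le hM hq (hμm ▸ csInf_le hbelow ⟨q, hqS, rfl⟩) ht0.le
end
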